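/- arXiv:1802.03069 — 7 statements merged into one kernel-verified Lean document; each statement's English description precedes it below -/
import Mathlib

section
/- For the function R(x,y,z) = x - ln((cosh(y/2)+cosh((x+z)/2))/(cosh(y/2)+cosh((x-z)/2))) and D(x,y,z) = R(x,y,z) + R(x,z,y) - x, the limit as x → 0⁺ of D(x,y,z)/x equals 2/(e^{(y+z)/2} + 1). -/
open Real Filter

/-- Norbury's gap function `R`. -/
noncomputable def R (x y z : ℝ) : ℝ :=
  x - Real.log ((Real.cosh (y / 2) + Real.cosh ((x + z) / 2)) /
      (Real.cosh (y / 2) + Real.cosh ((x - z) / 2)))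

/-- Norbury's gap function `D`. -/
noncomputable def D (x y z : ℝ) : ℝ := R x y z + R x z y - x

lemma aux_log_deriv (c w : ℝ) (hc : 0 < c) :
    HasDerivAt (fun x : ℝ => Real.log ((c + Real.cosh ((x + w) / 2)) /
        (c + Real.cosh ((x - w) / 2))))
      (Real.sinh (w / 2) / (c + Real.cosh (w / 2))) 0 := by
  have hN : ∀ x : ℝ, (0:ℝ) < c + Real.cosh ((x + w) / 2) := fun x =>
    add_pos hc (Real.cosh_pos _)
  have hM : ∀ x : ℝ, (0:ℝ) < c + Real.cosh ((x - w) / 2) := fun x =>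
    add_pos hc (Real.cosh_pos _)
  have heq : (fun x : ℝ => Real.log ((c + Real.cosh ((x + w) / 2)) /
        (c + Real.cosh ((x - w) / 2)))) =
      fun x : ℝ => Real.log (c + Real.cosh ((x + w) / 2)) -
        Real.log (c + Real.cosh ((x - w) / 2)) := by
    funext x
    exact Real.log_div (hN x).ne' (hM x).ne'
  rw [heq]
  have h1 : HasDerivAt (fun x : ℝ => (x + w) / 2) (1 / 2) 0 :=
    ((hasDerivAt_id 0).add_const w).div_const 2
  have h2 : HasDerivAt (fun x : ℝ => (x - w) / 2) (1 / 2) 0 :=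
    ((hasDerivAt_id 0).sub_const w).div_const 2
  have hN' := (((h1.cosh).const_add c).log (hN 0).ne')
  have hM' := (((h2.cosh).const_add c).log (hM 0).ne')
  have := hN'.sub hM'
  refine this.congr_deriv ?_
  simp only [zero_add, zero_sub, neg_div, Real.cosh_neg, Real.sinh_neg]
  ring

lemma my_deriv_eq (y z : ℝ) :
    1 - Real.sinh (z / 2) / (Real.cosh (y / 2) + Real.cosh (z / 2)) -
      Real.sinh (y / 2) / (Real.cosh (z / 2) + Real.cosh (y / 2)) =
      2 / (Real.exp ((y + z) / 2) + 1) := by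
  have ha : (0:ℝ) < Real.exp (y / 2) := Real.exp_pos _
  have hb : (0:ℝ) < Real.exp (z / 2) := Real.exp_pos _
  have hab : Real.exp ((y + z) / 2) = Real.exp (y / 2) * Real.exp (z / 2) := by
    rw [← Real.exp_add]; ring_nf
  rw [hab, Real.cosh_eq, Real.cosh_eq, Real.sinh_eq, Real.sinh_eq,
    Real.exp_neg, Real.exp_neg]
  set a := Real.exp (y / 2)
  set b := Real.exp (z / 2)
  have hsum : (0:ℝ) < (a + a⁻¹) / 2 + (b + b⁻¹) / 2 := by positivity
  have h1 : (0:ℝ) < a * b + 1 := by positivity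
  field_simp
  ring

/-- The limit as `x → 0⁺` of `D(x,y,z)/x` equals `2/(exp((y+z)/2) + 1)`. -/
theorem limit_D_div_x (y z : ℝ) :
    Tendsto (fun x : ℝ => D x y z / x) (nhdsWithin 0 (Set.Ioi 0))
      (nhds (2 / (Real.exp ((y + z) / 2) + 1))) := by
  have hd : HasDerivAt (fun x : ℝ => D x y z)
      (2 / (Real.exp ((y + z) / 2) + 1)) 0 := by
    have h1 := aux_log_deriv (Real.cosh (y / 2)) z (Real.cosh_pos _)
    have h2 := aux_log_deriv (Real.cosh (z / 2)) y (Real.cosh_pos _)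
    have hid : HasDerivAt (fun x : ℝ => x) 1 (0:ℝ) := hasDerivAt_id 0
    have := (hid.sub h1).sub h2
    have heq : (fun x : ℝ => D x y z) = fun x : ℝ =>
        (x - Real.log ((Real.cosh (y / 2) + Real.cosh ((x + z) / 2)) /
          (Real.cosh (y / 2) + Real.cosh ((x - z) / 2)))) -
        Real.log ((Real.cosh (z / 2) + Real.cosh ((x + y) / 2)) /
          (Real.cosh (z / 2) + Real.cosh ((x - y) / 2))) := by
      funext x; simp [D, R]; ring
    rw [heq]
    refine ((hid.sub h1).sub h2).congr_deriv ?_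
    rw [← my_deriv_eq y z]
  have hD0 : D 0 y z = 0 := by
    have h1 : Real.cosh (y / 2) + Real.cosh (z / 2) ≠ 0 := by positivity
    have h2 : Real.cosh (z / 2) + Real.cosh (y / 2) ≠ 0 := by positivity
    simp [D, R, show (0:ℝ) + z = z by ring, show (0:ℝ) - z = -z by ring,
      show (0:ℝ) + y = y by ring, show (0:ℝ) - y = -y by ring,
      neg_div, Real.cosh_neg, div_self h1, div_self h2]
  have hs := hasDerivAt_iff_tendsto_slope.mp hd
  have hs' := hs.mono_left (nhdsWithin_mono 0 (fun t ht => (Set.mem_Ioi.mp ht).ne'))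
  refine hs'.congr fun x => ?_
  simp [slope_def_field, hD0]
end

section
/- With R as above and with both x → 0⁺ and w → 0 (the second argument also tending to 0), R(x,w,z)/x tends to 2/(e^{z/2} + 1); equivalently, for fixed z, the limit as x → 0⁺ of R(x,0,z)/x equals 2/(e^{z/2}+1). -/
open Real Filter

lemma one_add_cosh_pos (t : ℝ) : 0 < 1 + Real.cosh t := by
  nlinarith [Real.one_le_cosh t]

lemma hd_log (c : ℝ) : HasDerivAt (fun x : ℝ => Real.log (1 + Real.cosh ((x + c) / 2)))
    (Real.sinh (c / 2) / 2 / (1 + Real.cosh (c / 2))) 0 := by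
  have h1 : HasDerivAt (fun x : ℝ => (x + c) / 2) (1 / 2) 0 :=
    ((hasDerivAt_id 0).add_const c).div_const 2
  have h2 := (Real.hasDerivAt_cosh ((0 + c) / 2)).comp 0 h1
  have h3 := h2.const_add 1
  have h4 := h3.log (ne_of_gt (one_add_cosh_pos ((0 + c) / 2)))
  simp only [Function.comp_def, zero_add] at h4
  convert h4 using 1
  ring

/-- With the second argument set to `0`, the limit as `x → 0⁺` of `R(x,0,z)/x`
equals `2/(exp(z/2) + 1)`. -/
theorem limit_R_cusp (z : ℝ) :
    Tendsto (fun x : ℝ => R x 0 z / x) (nhdsWithin 0 (Set.Ioi 0))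
      (nhds (2 / (Real.exp (z / 2) + 1))) := by
  have hN := hd_log z
  have hD : HasDerivAt (fun x : ℝ => Real.log (1 + Real.cosh ((x - z) / 2)))
      (Real.sinh (-z / 2) / 2 / (1 + Real.cosh (-z / 2))) 0 := by
    have := hd_log (-z)
    simpa [sub_eq_add_neg, neg_div] using this
  have heq : (fun x : ℝ => R x 0 z) = fun x : ℝ =>
      x - (Real.log (1 + Real.cosh ((x + z) / 2)) - Real.log (1 + Real.cosh ((x - z) / 2))) := by
    funext x
    have hNp := one_add_cosh_pos ((x + z) / 2)
    have hDp := one_add_cosh_pos ((x - z) / 2)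
    simp [R, Real.cosh_zero, Real.log_div (ne_of_gt hNp) (ne_of_gt hDp)]
  have hval : (1 : ℝ) - (Real.sinh (z / 2) / 2 / (1 + Real.cosh (z / 2))
      - Real.sinh (-z / 2) / 2 / (1 + Real.cosh (-z / 2))) = 2 / (Real.exp (z / 2) + 1) := by
    rw [neg_div, Real.sinh_neg, Real.cosh_neg]
    have hc : Real.cosh (z / 2) = (Real.exp (z / 2) + (Real.exp (z / 2))⁻¹) / 2 := by
      rw [Real.cosh_eq, Real.exp_neg]
    have hs : Real.sinh (z / 2) = (Real.exp (z / 2) - (Real.exp (z / 2))⁻¹) / 2 := by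
      rw [Real.sinh_eq, Real.exp_neg]
    have hu : 0 < Real.exp (z / 2) := Real.exp_pos _
    have hden : (0 : ℝ) < 1 + Real.cosh (z / 2) := one_add_cosh_pos _
    rw [hc, hs]
    rw [hc] at hden
    field_simp
    ring
  have hR : HasDerivAt (fun x : ℝ => R x 0 z) (2 / (Real.exp (z / 2) + 1)) 0 := by
    rw [heq, ← hval]
    exact (hasDerivAt_id 0).sub (hN.sub hD)
  have h0 : R 0 0 z = 0 := by
    unfold R
    have hp : (0:ℝ) < Real.cosh (0 / 2) + Real.cosh (z / 2) := by
      nlinarith [Real.one_le_cosh (z / 2), Real.one_le_cosh ((0:ℝ) / 2)]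
    rw [show ((0:ℝ) - z) / 2 = -(z / 2) by ring, show ((0:ℝ) + z) / 2 = z / 2 by ring,
      Real.cosh_neg, div_self (ne_of_gt hp), Real.log_one, sub_zero]
  have hslope := hasDerivAt_iff_tendsto_slope.mp hR
  refine Tendsto.congr' ?_ (hslope.mono_left (nhdsWithin_mono 0 fun x hx => ne_of_gt hx))
  filter_upwards [self_mem_nhdsWithin] with x hx
  simp [slope_def_field, h0]
end

section
/- Suppose real numbers ℓν, ℓμ, ℓμ' > 0 satisfy 1 + cosh(ℓν/2) = 2·sinh(ℓμ/2)·sinh(ℓμ'/2). Then 1 - (cosh(ℓν/2)+e^{-ℓμ})/(cosh(ℓν/2)+cosh ℓμ) - (cosh(ℓν/2)+e^{-ℓμ'})/(cosh(ℓν/2)+cosh ℓμ') = (e^{-ℓμ/2}+e^{-ℓμ'/2})/(sinh(ℓμ/2)+sinh(ℓμ'/2)). -/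
open Real

/-- Under the cuspidal trace relation `1 + cosh(ℓν/2) = 2 sinh(ℓμ/2) sinh(ℓμ'/2)`,
`1 - (cosh(ℓν/2)+e^{-ℓμ})/(cosh(ℓν/2)+cosh ℓμ)
   - (cosh(ℓν/2)+e^{-ℓμ'})/(cosh(ℓν/2)+cosh ℓμ')
 = (e^{-ℓμ/2}+e^{-ℓμ'/2})/(sinh(ℓμ/2)+sinh(ℓμ'/2))`. -/
theorem mobius_gap_identity (ℓν ℓμ ℓμ' : ℝ)
    (hν : 0 < ℓν) (hμ : 0 < ℓμ) (hμ' : 0 < ℓμ')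
    (htrace : 1 + Real.cosh (ℓν / 2) = 2 * Real.sinh (ℓμ / 2) * Real.sinh (ℓμ' / 2)) :
    1 - (Real.cosh (ℓν / 2) + Real.exp (-ℓμ)) / (Real.cosh (ℓν / 2) + Real.cosh ℓμ)
      - (Real.cosh (ℓν / 2) + Real.exp (-ℓμ')) / (Real.cosh (ℓν / 2) + Real.cosh ℓμ') =
      (Real.exp (-ℓμ / 2) + Real.exp (-ℓμ' / 2)) /
        (Real.sinh (ℓμ / 2) + Real.sinh (ℓμ' / 2)) := by
  have hc : Real.cosh (ℓν / 2) = 2 * Real.sinh (ℓμ / 2) * Real.sinh (ℓμ' / 2) - 1 := by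
    linarith
  set a := Real.sinh (ℓμ / 2) with ha
  set b := Real.sinh (ℓμ' / 2) with hb
  set k := Real.exp (-ℓμ / 2) with hk
  set k' := Real.exp (-ℓμ' / 2) with hk'
  have ha0 : 0 < a := by
    rw [ha]; exact (Real.sinh_pos_iff).mpr (by linarith)
  have hb0 : 0 < b := by
    rw [hb]; exact (Real.sinh_pos_iff).mpr (by linarith)
  -- cosh ℓμ = 2 a^2 + 1
  have hcosha : Real.cosh ℓμ = 2 * a ^ 2 + 1 := by
    have h2 : ℓμ = 2 * (ℓμ / 2) := by ring
    rw [h2, Real.cosh_two_mul, ha]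
    have := Real.cosh_sq (ℓμ / 2)
    linarith
  have hcoshb : Real.cosh ℓμ' = 2 * b ^ 2 + 1 := by
    have h2 : ℓμ' = 2 * (ℓμ' / 2) := by ring
    rw [h2, Real.cosh_two_mul, hb]
    have := Real.cosh_sq (ℓμ' / 2)
    linarith
  -- exp(-ℓμ) = k^2 and k^2 = 1 - 2 a k
  have hexpa : Real.exp (-ℓμ) = 1 - 2 * a * k := by
    have h1 : Real.exp (-ℓμ) = k * k := by
      rw [hk, ← Real.exp_add]; ring_nf
    have h2 : Real.exp (ℓμ / 2) * k = 1 := by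
      rw [hk, ← Real.exp_add, show ℓμ / 2 + -ℓμ / 2 = 0 by ring, Real.exp_zero]
    have h3 : a = (Real.exp (ℓμ / 2) - k) / 2 := by
      rw [ha, Real.sinh_eq, hk]; ring_nf
    rw [h1, h3]
    nlinarith [h2]
  have hexpb : Real.exp (-ℓμ') = 1 - 2 * b * k' := by
    have h1 : Real.exp (-ℓμ') = k' * k' := by
      rw [hk', ← Real.exp_add]; ring_nf
    have h2 : Real.exp (ℓμ' / 2) * k' = 1 := by
      rw [hk', ← Real.exp_add, show ℓμ' / 2 + -ℓμ' / 2 = 0 by ring, Real.exp_zero]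
    have h3 : b = (Real.exp (ℓμ' / 2) - k') / 2 := by
      rw [hb, Real.sinh_eq, hk']; ring_nf
    rw [h1, h3]
    nlinarith [h2]
  rw [hc, hcosha, hcoshb, hexpa, hexpb]
  have d1 : 2 * a * b - 1 + (2 * a ^ 2 + 1) ≠ 0 := by nlinarith
  have d2 : 2 * a * b - 1 + (2 * b ^ 2 + 1) ≠ 0 := by nlinarith
  have d3 : a + b ≠ 0 := by positivity
  field_simp
  ring
end

section
/- Suppose ℓν, ℓμ, ℓμ' > 0 satisfy 1 + cosh(ℓν/2) = 2·sinh(ℓμ/2)·sinh(ℓμ'/2). Then (e^{ℓν/2}+1)^{-1} = (e^{(ℓν+2ℓμ)/2}+1)^{-1} + (e^{(ℓν+2ℓμ')/2}+1)^{-1} + (e^{(ℓμ+ℓμ')/2}-1)^{-1}. -/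
open Real

/-- Under the cuspidal trace relation, the Möbius-band gap decomposes:
`(e^{ℓν/2}+1)⁻¹ = (e^{(ℓν+2ℓμ)/2}+1)⁻¹ + (e^{(ℓν+2ℓμ')/2}+1)⁻¹ + (e^{(ℓμ+ℓμ')/2}-1)⁻¹`. -/
theorem triple_sum_identity (ℓν ℓμ ℓμ' : ℝ)
    (hν : 0 < ℓν) (hμ : 0 < ℓμ) (hμ' : 0 < ℓμ')
    (htrace : 1 + Real.cosh (ℓν / 2) = 2 * Real.sinh (ℓμ / 2) * Real.sinh (ℓμ' / 2)) :
    (Real.exp (ℓν / 2) + 1)⁻¹ =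
      (Real.exp ((ℓν + 2 * ℓμ) / 2) + 1)⁻¹ +
        (Real.exp ((ℓν + 2 * ℓμ') / 2) + 1)⁻¹ +
        (Real.exp ((ℓμ + ℓμ') / 2) - 1)⁻¹ := by
  set a := Real.exp (ℓμ / 2) with ha
  set b := Real.exp (ℓμ' / 2) with hb
  set c := Real.exp (ℓν / 2) with hc
  have hapos : 0 < a := Real.exp_pos _
  have hbpos : 0 < b := Real.exp_pos _
  have hcpos : 0 < c := Real.exp_pos _
  have e1 : Real.exp ((ℓν + 2 * ℓμ) / 2) = c * a ^ 2 := by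
    rw [show (ℓν + 2 * ℓμ) / 2 = ℓν / 2 + (ℓμ / 2 + ℓμ / 2) by ring,
      Real.exp_add, Real.exp_add, ha, hc]; ring
  have e2 : Real.exp ((ℓν + 2 * ℓμ') / 2) = c * b ^ 2 := by
    rw [show (ℓν + 2 * ℓμ') / 2 = ℓν / 2 + (ℓμ' / 2 + ℓμ' / 2) by ring,
      Real.exp_add, Real.exp_add, hb, hc]; ring
  have e3 : Real.exp ((ℓμ + ℓμ') / 2) = a * b := by
    rw [show (ℓμ + ℓμ') / 2 = ℓμ / 2 + ℓμ' / 2 by ring, Real.exp_add, ha, hb]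
  have hab1 : 1 < a * b := by
    rw [← e3]
    calc 1 = Real.exp 0 := Real.exp_zero.symm
      _ < _ := Real.exp_lt_exp.mpr (by linarith)
  -- Turn the trace relation into a polynomial relation
  have hP : a * b * c ^ 2 + 2 * a * b * c + a * b - a ^ 2 * b ^ 2 * c
      + a ^ 2 * c + b ^ 2 * c - c = 0 := by
    have hcosh : Real.cosh (ℓν / 2) = (c + c⁻¹) / 2 := by
      rw [Real.cosh_eq, Real.exp_neg, hc]
    have hsa : Real.sinh (ℓμ / 2) = (a - a⁻¹) / 2 := by
      rw [Real.sinh_eq, Real.exp_neg, ha]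
    have hsb : Real.sinh (ℓμ' / 2) = (b - b⁻¹) / 2 := by
      rw [Real.sinh_eq, Real.exp_neg, hb]
    rw [hcosh, hsa, hsb] at htrace
    field_simp at htrace
    nlinarith [htrace]
  rw [e1, e2, e3]
  have h1 : c * a ^ 2 + 1 > 0 := by positivity
  have h2 : c * b ^ 2 + 1 > 0 := by positivity
  have h3 : a * b - 1 > 0 := by linarith
  have h4 : c + 1 > 0 := by linarith
  field_simp
  linear_combination (-(a * b * c + 1)) * hP
end

section
/- Also under the relation 1 + cosh(ℓν/2) = 2·sinh(ℓμ/2)·sinh(ℓμ'/2) with ℓν, ℓμ, ℓμ' > 0, one has 1 - sinh(ℓν/2)·(2·cosh(ℓν/2) + cosh ℓμ + cosh ℓμ')/((cosh(ℓν/2)+cosh ℓμ)(cosh(ℓν/2)+cosh ℓμ')) = 2/(e^{ℓν/2}+1). -/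
open Real

/-- Under the cuspidal trace relation,
`1 - sinh(ℓν/2)(2 cosh(ℓν/2)+cosh ℓμ+cosh ℓμ') /
 ((cosh(ℓν/2)+cosh ℓμ)(cosh(ℓν/2)+cosh ℓμ')) = 2/(e^{ℓν/2}+1)`. -/
theorem mobius_total_gap (ℓν ℓμ ℓμ' : ℝ)
    (hν : 0 < ℓν) (hμ : 0 < ℓμ) (hμ' : 0 < ℓμ')
    (htrace : 1 + Real.cosh (ℓν / 2) = 2 * Real.sinh (ℓμ / 2) * Real.sinh (ℓμ' / 2)) :
    1 - Real.sinh (ℓν / 2) *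
        (2 * Real.cosh (ℓν / 2) + Real.cosh ℓμ + Real.cosh ℓμ') /
        ((Real.cosh (ℓν / 2) + Real.cosh ℓμ) * (Real.cosh (ℓν / 2) + Real.cosh ℓμ')) =
      2 / (Real.exp (ℓν / 2) + 1) := by
  have hu : 0 < Real.sinh (ℓμ / 2) := Real.sinh_pos_iff.2 (by linarith)
  have hv : 0 < Real.sinh (ℓμ' / 2) := Real.sinh_pos_iff.2 (by linarith)
  have hs : 0 < Real.sinh (ℓν / 2) := Real.sinh_pos_iff.2 (by linarith)
  have hA : Real.cosh ℓμ = 2 * Real.sinh (ℓμ / 2) ^ 2 + 1 := by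
    have h := Real.cosh_two_mul (ℓμ / 2)
    have h2 := Real.cosh_sq (ℓμ / 2)
    rw [show 2 * (ℓμ / 2) = ℓμ by ring] at h
    rw [h, h2]; ring
  have hB : Real.cosh ℓμ' = 2 * Real.sinh (ℓμ' / 2) ^ 2 + 1 := by
    have h := Real.cosh_two_mul (ℓμ' / 2)
    have h2 := Real.cosh_sq (ℓμ' / 2)
    rw [show 2 * (ℓμ' / 2) = ℓμ' by ring] at h
    rw [h, h2]; ring
  have he : Real.exp (ℓν / 2) = Real.cosh (ℓν / 2) + Real.sinh (ℓν / 2) :=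
    (Real.cosh_add_sinh _).symm
  have hcv : Real.cosh (ℓν / 2) = 2 * Real.sinh (ℓμ / 2) * Real.sinh (ℓμ' / 2) - 1 := by
    linarith
  have hsq : Real.sinh (ℓν / 2) ^ 2 = Real.cosh (ℓν / 2) ^ 2 - 1 := by
    have := Real.cosh_sq (ℓν / 2); linarith
  set u := Real.sinh (ℓμ / 2)
  set v := Real.sinh (ℓμ' / 2)
  set s := Real.sinh (ℓν / 2)
  rw [hA, hB, he, hcv]
  rw [hcv] at hsq
  have hd1 : (2 * u * v - 1 + (2 * u ^ 2 + 1)) = 2 * u * (u + v) := by ring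
  have hd2 : (2 * u * v - 1 + (2 * v ^ 2 + 1)) = 2 * v * (u + v) := by ring
  have huv : 0 < u + v := by linarith
  have h1 : (2 * u * v - 1 + (2 * u ^ 2 + 1)) ≠ 0 := by rw [hd1]; positivity
  have h2 : (2 * u * v - 1 + (2 * v ^ 2 + 1)) ≠ 0 := by rw [hd2]; positivity
  have h3 : 2 * u * v - 1 + s + 1 ≠ 0 := by
    have : 0 < 2 * u * v := by positivity
    intro h; nlinarith
  field_simp
  nlinarith [hsq, sq_nonneg (u + v), sq_nonneg (u - v), mul_pos hu hv,
    mul_pos (mul_pos hu hv) hs, sq_nonneg s]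
end

section
/- For positive reals x with x sufficiently small (e.g. x ≤ 1) and reals a = ℓα ≥ 0, b = ℓβ ≥ 0, the term D̂(x,a,b) = (R(x,a,b)+R(x,b,a)-x)/x satisfies D̂(x,a,b) < 6·e^{-(a+b)/2}. -/
open Real

lemma cosh_prod_identity (a b x : ℝ) :
    (Real.cosh (a/2) + Real.cosh ((x+b)/2)) * ((Real.cosh (b/2) + Real.cosh ((x+a)/2)))
      * Real.cosh ((a+b-x)/4) ^ 2
    = (Real.cosh (a/2) + Real.cosh ((x-b)/2)) * ((Real.cosh (b/2) + Real.cosh ((x-a)/2)))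
      * Real.cosh ((a+b+x)/4) ^ 2 := by
  have key : ∀ t : ℝ, Real.cosh t = (Real.exp t + (Real.exp t)⁻¹)/2 := by
    intro t; rw [Real.cosh_eq, Real.exp_neg]
  rw [key, key, key, key, key, key, key, key]
  rw [show a/2 = a/4 + a/4 by ring, show b/2 = b/4 + b/4 by ring,
      show (x+b)/2 = x/4 + x/4 + (b/4 + b/4) by ring,
      show (x-b)/2 = x/4 + x/4 - (b/4 + b/4) by ring,
      show (x+a)/2 = x/4 + x/4 + (a/4 + a/4) by ring,
      show (x-a)/2 = x/4 + x/4 - (a/4 + a/4) by ring,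
      show (a+b-x)/4 = a/4 + b/4 - x/4 by ring,
      show (a+b+x)/4 = a/4 + b/4 + x/4 by ring]
  simp only [Real.exp_add, Real.exp_sub]
  have hA : Real.exp (a/4) ≠ 0 := Real.exp_ne_zero _
  have hB : Real.exp (b/4) ≠ 0 := Real.exp_ne_zero _
  have hX : Real.exp (x/4) ≠ 0 := Real.exp_ne_zero _
  field_simp
  ring

set_option maxHeartbeats 1000000 in
/-- For `x > 0` sufficiently small and all `a, b ≥ 0`,
`D̂(x,a,b) = (R(x,a,b)+R(x,b,a)-x)/x < 6 e^{-(a+b)/2}`. -/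
theorem Dhat_small_bound :
    ∃ δ : ℝ, 0 < δ ∧ ∀ x : ℝ, 0 < x → x < δ → ∀ a b : ℝ, 0 ≤ a → 0 ≤ b →
      (R x a b + R x b a - x) / x < 6 * Real.exp (-(a + b) / 2) := by
  refine ⟨1, one_pos, ?_⟩
  intro x hx hx1 a b ha hb
  set u : ℝ := (a+b+x)/4 with hu
  set v : ℝ := (a+b-x)/4 with hv
  have hcu : (0:ℝ) < Real.cosh u := Real.cosh_pos _
  have hcv : (0:ℝ) < Real.cosh v := Real.cosh_pos _
  have hN1 : (0:ℝ) < Real.cosh (a/2) + Real.cosh ((x+b)/2) :=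
    add_pos (Real.cosh_pos _) (Real.cosh_pos _)
  have hD1 : (0:ℝ) < Real.cosh (a/2) + Real.cosh ((x-b)/2) :=
    add_pos (Real.cosh_pos _) (Real.cosh_pos _)
  have hN2 : (0:ℝ) < Real.cosh (b/2) + Real.cosh ((x+a)/2) :=
    add_pos (Real.cosh_pos _) (Real.cosh_pos _)
  have hD2 : (0:ℝ) < Real.cosh (b/2) + Real.cosh ((x-a)/2) :=
    add_pos (Real.cosh_pos _) (Real.cosh_pos _)
  -- Step 1: rewrite the sum
  have hdiv : (Real.cosh (a/2) + Real.cosh ((x+b)/2)) / (Real.cosh (a/2) + Real.cosh ((x-b)/2))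
      * ((Real.cosh (b/2) + Real.cosh ((x+a)/2)) / (Real.cosh (b/2) + Real.cosh ((x-a)/2)))
      = (Real.cosh u / Real.cosh v)^2 := by
    have h := cosh_prod_identity a b x
    rw [div_mul_div_comm, div_pow, div_eq_div_iff (by positivity) (by positivity)]
    rw [hu, hv]
    linear_combination h
  have hlog : Real.log ((Real.cosh (a/2) + Real.cosh ((x+b)/2)) / (Real.cosh (a/2) + Real.cosh ((x-b)/2)))
      + Real.log ((Real.cosh (b/2) + Real.cosh ((x+a)/2)) / (Real.cosh (b/2) + Real.cosh ((x-a)/2)))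
      = 2 * Real.log (Real.cosh u / Real.cosh v) := by
    rw [← Real.log_mul (by positivity) (by positivity), hdiv, Real.log_pow]
    norm_num
  have hRsum : R x a b + R x b a - x = x - 2 * Real.log (Real.cosh u / Real.cosh v) := by
    simp only [R]
    rw [show x - Real.log ((Real.cosh (a / 2) + Real.cosh ((x + b) / 2)) /
          (Real.cosh (a / 2) + Real.cosh ((x - b) / 2))) +
        (x - Real.log ((Real.cosh (b / 2) + Real.cosh ((x + a) / 2)) /
          (Real.cosh (b / 2) + Real.cosh ((x - a) / 2)))) - x
        = x - (Real.log ((Real.cosh (a / 2) + Real.cosh ((x + b) / 2)) /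
          (Real.cosh (a / 2) + Real.cosh ((x - b) / 2))) +
          Real.log ((Real.cosh (b / 2) + Real.cosh ((x + a) / 2)) /
          (Real.cosh (b / 2) + Real.cosh ((x - a) / 2)))) by ring, hlog]
  -- Step 2: convexity bound  log(cosh u / cosh v) ≥ tanh v * (x/2)
  have hsc : Real.sinh v < Real.cosh v := by
    nlinarith [Real.cosh_sq_sub_sinh_sq v, Real.cosh_pos v]
  have hsc' : -Real.cosh v < Real.sinh v := by
    nlinarith [Real.cosh_sq_sub_sinh_sq v, Real.cosh_pos v]
  set T : ℝ := Real.tanh v with hT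
  have hT1 : T < 1 := by rw [hT, Real.tanh_eq_sinh_div_cosh, div_lt_one hcv]; exact hsc
  have hTm1 : -1 < T := by
    rw [hT, Real.tanh_eq_sinh_div_cosh, lt_div_iff₀ hcv]; linarith
  have hconv := convexOn_exp.2 (Set.mem_univ (x/2)) (Set.mem_univ (-(x/2)))
      (by linarith : (0:ℝ) ≤ (1+T)/2) (by linarith : (0:ℝ) ≤ (1-T)/2) (by ring)
  simp only [smul_eq_mul] at hconv
  rw [show (1+T)/2 * (x/2) + (1-T)/2 * (-(x/2)) = T * (x/2) by ring] at hconv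
  have hexp_le : Real.exp (T * (x/2)) ≤ Real.cosh (x/2) + T * Real.sinh (x/2) := by
    rw [Real.cosh_eq, Real.sinh_eq]
    calc Real.exp (T * (x/2)) ≤ (1+T)/2 * Real.exp (x/2) + (1-T)/2 * Real.exp (-(x/2)) := hconv
    _ = (Real.exp (x/2) + Real.exp (-(x/2))) / 2 + T * ((Real.exp (x/2) - Real.exp (-(x/2))) / 2) := by ring
  have hcu_eq : Real.cosh u = Real.cosh v * Real.cosh (x/2) + Real.sinh v * Real.sinh (x/2) := by
    rw [show u = v + x/2 by rw [hu, hv]; ring, Real.cosh_add]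
  have hratio : Real.cosh u / Real.cosh v = Real.cosh (x/2) + T * Real.sinh (x/2) := by
    rw [hcu_eq, hT, Real.tanh_eq_sinh_div_cosh]
    field_simp
  have hlogge : T * (x/2) ≤ Real.log (Real.cosh u / Real.cosh v) := by
    rw [hratio]
    calc T * (x/2) = Real.log (Real.exp (T * (x/2))) := (Real.log_exp _).symm
    _ ≤ Real.log (Real.cosh (x/2) + T * Real.sinh (x/2)) :=
        Real.log_le_log (Real.exp_pos _) hexp_le
  -- Step 3: D̂ ≤ 1 - T
  have hstep3 : (R x a b + R x b a - x) / x ≤ 1 - T := by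
    rw [hRsum, div_le_iff₀ hx]
    nlinarith
  -- Step 4: 1 - T ≤ 2 * exp(-2v)
  have h1 : Real.exp (-(2*v)) * Real.exp v = Real.exp (-v) := by
    rw [← Real.exp_add]; ring_nf
  have h2 : Real.exp (-(2*v)) * Real.exp (-v) = Real.exp (-(3*v)) := by
    rw [← Real.exp_add]; ring_nf
  have hkey : Real.exp (-v) ≤ 2 * Real.exp (-(2*v)) * Real.cosh v := by
    rw [Real.cosh_eq]
    have e : 2 * Real.exp (-(2*v)) * ((Real.exp v + Real.exp (-v))/2)
        = Real.exp (-v) + Real.exp (-(3*v)) := by linear_combination h1 + h2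
    linarith [Real.exp_pos (-(3*v)), e]
  have hstep4 : 1 - T ≤ 2 * Real.exp (-(2*v)) := by
    rw [hT, Real.tanh_eq_sinh_div_cosh,
        show 1 - Real.sinh v / Real.cosh v = (Real.cosh v - Real.sinh v) / Real.cosh v by
          field_simp,
        div_le_iff₀ hcv, Real.cosh_sub_sinh]
    linarith [hkey]
  -- Step 5: conclude
  have hsplit : Real.exp (-(2*v)) = Real.exp (x/2) * Real.exp (-(a+b)/2) := by
    rw [← Real.exp_add]
    congr 1
    rw [hv]; ring
  have hx2 : Real.exp (x/2) < 3 := by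
    have h12 : Real.exp (x/2) < Real.exp (1/2) := Real.exp_lt_exp.2 (by linarith)
    have he : Real.exp (1/2) * Real.exp (1/2) = Real.exp 1 := by
      rw [← Real.exp_add]; norm_num
    have h9 : Real.exp 1 < 9 := lt_trans Real.exp_one_lt_d9 (by norm_num)
    nlinarith [h9, he, Real.exp_pos (1/2), h12]
  have hfin : 2 * Real.exp (-(2*v)) < 6 * Real.exp (-(a+b)/2) := by
    rw [hsplit]
    have := Real.exp_pos (-(a+b)/2)
    nlinarith
  linarith
end

section
/- Let U ⊂ ℂⁿ be a connected open set, f : U → ℂ holomorphic, and M ⊂ U a connected real-analytic totally real submanifold of real dimension n. If f vanishes on M then f vanishes identically on U. -/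
open Filter
open scoped NNReal ENNReal

namespace IdentityTotallyRealAux

/-- The coordinatewise inclusion `ℝⁿ → ℂⁿ`. -/
def incl (n : ℕ) (y : Fin n → ℝ) : Fin n → ℂ := fun i => (y i : ℂ)

lemma nnnorm_incl {n : ℕ} (y : Fin n → ℝ) : ‖incl n y‖₊ = ‖y‖₊ := by
  simp only [Pi.nnnorm_def, incl]
  congr 1
  funext i
  simp [Complex.nnnorm_real]

lemma norm_incl {n : ℕ} (y : Fin n → ℝ) : ‖incl n y‖ = ‖y‖ := by
  have := nnnorm_incl y
  simpa [← coe_nnnorm] using congrArg NNReal.toReal this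

lemma incl_single {n : ℕ} (i : Fin n) : incl n (Pi.single i 1) = Pi.single i 1 := by
  funext b
  simp only [incl, Pi.single_apply]
  split_ifs <;> simp

lemma snoc_const {α : Type*} [Zero α] (v : α) :
    (Fin.snoc (0 : Fin 0 → α) v : Fin 1 → α) = fun _ => v := by
  funext j
  have hj : j = Fin.last 0 := Fin.ext (by rw [Fin.val_last]; exact Nat.lt_one_iff.1 j.isLt)
  rw [hj, Fin.snoc_last]

/-- Frequently-zero along real points accumulating at `0`. -/
lemma freq_real {h : ℂ → ℂ} {ρ : ℝ} (hρ : 0 < ρ)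
    (hz : ∀ x : ℝ, |x| < ρ → h x = 0) : ∃ᶠ t in nhdsWithin (0 : ℂ) {0}ᶜ, h t = 0 := by
  have h1 : Filter.Tendsto (fun m : ℕ => ((ρ / 2) * (1 / (m + 1)) : ℝ)) atTop (nhds 0) := by
    have := tendsto_one_div_add_atTop_nhds_zero_nat.const_mul (ρ / 2)
    simpa using this
  have h2 : Filter.Tendsto (fun m : ℕ => (((ρ / 2) * (1 / (m + 1)) : ℝ) : ℂ)) atTop
      (nhds (0 : ℂ)) := by
    have := (Complex.continuous_ofReal.tendsto (0 : ℝ)).comp h1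
    simpa [Function.comp_def] using this
  have hpos : ∀ m : ℕ, (0 : ℝ) < (ρ / 2) * (1 / (m + 1)) := by
    intro m
    have hm : (0 : ℝ) < (m : ℝ) + 1 := by positivity
    positivity
  have h3 : Filter.Tendsto (fun m : ℕ => (((ρ / 2) * (1 / (m + 1)) : ℝ) : ℂ)) atTop
      (nhdsWithin (0 : ℂ) {0}ᶜ) := by
    apply tendsto_nhdsWithin_of_tendsto_nhds_of_eventually_within _ h2
    filter_upwards with m
    simp only [Set.mem_compl_iff, Set.mem_singleton_iff]
    exact_mod_cast (hpos m).ne'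
  apply h3.frequently
  apply Filter.Frequently.of_forall
  intro m
  apply hz
  have hm : (1 : ℝ) / (m + 1) ≤ 1 := by
    rw [div_le_one (by positivity)]
    linarith [Nat.cast_nonneg (α := ℝ) m]
  have : (ρ / 2) * (1 / (m + 1)) ≤ ρ / 2 := by
    calc (ρ / 2) * (1 / (m + 1)) ≤ (ρ / 2) * 1 := by
          apply mul_le_mul_of_nonneg_left hm (by positivity)
      _ = ρ / 2 := mul_one _
  rw [abs_of_pos (hpos m)]
  linarith

/-- One-variable slice identity theorem. -/
lemma slice_zero {ρ : ℝ} (hρ : 0 < ρ) {h : ℂ → ℂ}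
    (hdiff : DifferentiableOn ℂ h (Metric.ball 0 ρ))
    (hfreq : ∃ᶠ t in nhdsWithin (0 : ℂ) {0}ᶜ, h t = 0) :
    Set.EqOn h 0 (Metric.ball 0 ρ) :=
  (hdiff.analyticOnNhd Metric.isOpen_ball).eqOn_zero_of_preconnected_of_frequently_eq_zero
    (convex_ball (0 : ℂ) ρ).isPreconnected (Metric.mem_ball_self hρ) hfreq

/-- A holomorphic function on a polydisc vanishing on the real points vanishes. -/
lemma polydisc_zero {n : ℕ} {ρ : ℝ} (hρ : 0 < ρ) {g : (Fin n → ℂ) → ℂ}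
    (hg : DifferentiableOn ℂ g (Metric.ball 0 ρ))
    (hreal : ∀ y : Fin n → ℝ, ‖y‖ < ρ → g (incl n y) = 0) :
    ∀ z ∈ Metric.ball (0 : Fin n → ℂ) ρ, g z = 0 := by
  suffices H : ∀ k : ℕ, ∀ z ∈ Metric.ball (0 : Fin n → ℂ) ρ,
      (∀ i : Fin n, k ≤ (i : ℕ) → (z i).im = 0) → g z = 0 by
    intro z hz
    exact H n z hz (fun i hi => absurd i.isLt (by omega))
  intro k
  induction k with
  | zero =>
    intro z hz hzim
    have hzr : z = incl n (fun i => (z i).re) := by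
      funext i
      show z i = ((z i).re : ℂ)
      have him0 : (z i).im = 0 := hzim i (Nat.zero_le _)
      exact Complex.ext (by simp) (by simp [him0])
    rw [hzr]
    apply hreal
    have : ‖(fun i => (z i).re : Fin n → ℝ)‖ = ‖z‖ := by
      rw [← norm_incl, ← hzr]
    rw [this]
    exact mem_ball_zero_iff.1 hz
  | succ k ih =>
    intro z hz him
    by_cases hk : k < n
    · set κ : Fin n := ⟨k, hk⟩ with hκ
      have hupd : ∀ t : ℂ, Function.update z κ t
          = z + (t - z κ) • (Pi.single κ 1 : Fin n → ℂ) := by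
        intro t
        funext i
        by_cases hi : i = κ
        · subst hi; simp
        · simp [Function.update_of_ne hi, Pi.single_apply, hi]
      have hmaps : ∀ t : ℂ, t ∈ Metric.ball (0 : ℂ) ρ →
          Function.update z κ t ∈ Metric.ball (0 : Fin n → ℂ) ρ := by
        intro t ht
        rw [mem_ball_zero_iff, pi_norm_lt_iff hρ]
        intro i
        by_cases hi : i = κ
        · subst hi
          rw [Function.update_self]
          exact mem_ball_zero_iff.1 ht
        · rw [Function.update_of_ne hi]
          exact lt_of_le_of_lt (norm_le_pi_norm z i) (mem_ball_zero_iff.1 hz)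
      have hdiffh : DifferentiableOn ℂ (fun t => g (Function.update z κ t))
          (Metric.ball (0 : ℂ) ρ) := by
        have hinner : Differentiable ℂ
            (fun t : ℂ => z + (t - z κ) • (Pi.single κ 1 : Fin n → ℂ)) := by
          apply (differentiable_const z).add
          exact (differentiable_id.sub_const (z κ)).smul_const (Pi.single κ 1 : Fin n → ℂ)
        have : (fun t : ℂ => g (Function.update z κ t))
            = g ∘ (fun t : ℂ => z + (t - z κ) • (Pi.single κ 1 : Fin n → ℂ)) := by
          funext t
          simp [hupd t]
        rw [this]
        apply hg.comp hinner.differentiableOn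
        intro t ht
        show z + (t - z κ) • (Pi.single κ 1 : Fin n → ℂ) ∈ Metric.ball 0 ρ
        rw [← hupd t]
        exact hmaps t ht
      have hre : ∀ x : ℝ, |x| < ρ → (fun t => g (Function.update z κ t)) (x : ℂ) = 0 := by
        intro x hx
        have hxball : ((x : ℂ)) ∈ Metric.ball (0 : ℂ) ρ := by
          rw [mem_ball_zero_iff, Complex.norm_real, Real.norm_eq_abs]
          exact hx
        apply ih _ (hmaps _ hxball)
        intro i hi
        by_cases hiκ : i = κ
        · subst hiκ
          rw [Function.update_self]
          exact Complex.ofReal_im x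
        · rw [Function.update_of_ne hiκ]
          apply him
          have : (i : ℕ) ≠ k := fun hik => hiκ (Fin.ext hik)
          omega
      have heq := slice_zero hρ hdiffh (freq_real hρ hre)
      have hzκ : z κ ∈ Metric.ball (0 : ℂ) ρ :=
        mem_ball_zero_iff.2 (lt_of_le_of_lt (norm_le_pi_norm z κ) (mem_ball_zero_iff.1 hz))
      have := heq hzκ
      simpa [Function.update_eq_self] using this
    · apply ih z hz
      intro i hi
      exact absurd i.isLt (by omega)

/-- Global propagation of local vanishing by one-variable slices. -/
lemma global_zero {n : ℕ} {U : Set (Fin n → ℂ)} (hUopen : IsOpen U)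
    (hUconn : IsPreconnected U) {f : (Fin n → ℂ) → ℂ} (hf : DifferentiableOn ℂ f U)
    {x₀ : Fin n → ℂ} (hx₀ : x₀ ∈ U) (hev : f =ᶠ[nhds x₀] 0) : ∀ x ∈ U, f x = 0 := by
  set S := {z : Fin n → ℂ | f =ᶠ[nhds z] 0} with hSdef
  have hSopen : IsOpen S := by
    rw [isOpen_iff_mem_nhds]
    intro z hz
    exact (hz : f =ᶠ[nhds z] 0).eventually_nhds
  have hclos : closure S ∩ U ⊆ S := by
    rintro z ⟨hzc, hzU⟩
    obtain ⟨r, hr, hball⟩ := Metric.isOpen_iff.1 hUopen z hzU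
    obtain ⟨s₀, hs₀S, hs₀d⟩ := Metric.mem_closure_iff.1 hzc (r / 6) (by positivity)
    obtain ⟨ε, hεpos, hεball⟩ := Metric.eventually_nhds_iff_ball.1 (hs₀S : f =ᶠ[nhds s₀] 0)
    have hkey : ∀ w ∈ Metric.ball z (r / 6), f w = 0 := by
      intro w hw
      set c := w - s₀ with hc
      have hcnorm : ‖c‖ < r / 3 := by
        have h1 : dist w z < r / 6 := hw
        have h2 : dist z s₀ < r / 6 := hs₀d
        calc ‖c‖ = dist w s₀ := by rw [dist_eq_norm]
          _ ≤ dist w z + dist z s₀ := dist_triangle _ _ _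
          _ < r / 6 + r / 6 := by linarith
          _ = r / 3 := by ring
      have hsub : ∀ t : ℂ, ‖t‖ < 2 → s₀ + t • c ∈ U := by
        intro t ht
        apply hball
        have : dist (s₀ + t • c) z ≤ dist (s₀ + t • c) s₀ + dist s₀ z := dist_triangle _ _ _
        have h1 : dist (s₀ + t • c) s₀ = ‖t • c‖ := by
          rw [dist_eq_norm]; congr 1; abel
        have h2 : ‖t • c‖ ≤ 2 * ‖c‖ := by
          rw [norm_smul]
          apply mul_le_mul_of_nonneg_right ht.le (norm_nonneg _)
        have h3 : dist s₀ z < r / 6 := by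
          rw [dist_comm]; exact hs₀d
        calc dist (s₀ + t • c) z ≤ dist (s₀ + t • c) s₀ + dist s₀ z := dist_triangle _ _ _
          _ < 2 * ‖c‖ + r / 6 := by rw [h1]; linarith
          _ < 2 * (r / 3) + r / 6 := by linarith
          _ < r := by linarith
      have hdiffh : DifferentiableOn ℂ (fun t : ℂ => f (s₀ + t • c)) (Metric.ball 0 2) := by
        intro t ht
        have htU : s₀ + t • c ∈ U := hsub t (mem_ball_zero_iff.1 ht)
        have hfd : DifferentiableAt ℂ f (s₀ + t • c) :=
          hf.differentiableAt (hUopen.mem_nhds htU)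
        have hinner : DifferentiableAt ℂ (fun t : ℂ => s₀ + t • c) t :=
          (differentiable_const s₀).differentiableAt.add
            (differentiable_id.smul_const c).differentiableAt
        exact (hfd.comp t hinner).differentiableWithinAt
      have hev0 : (fun t : ℂ => f (s₀ + t • c)) =ᶠ[nhds (0 : ℂ)] 0 := by
        have htend : Filter.Tendsto (fun t : ℂ => s₀ + t • c) (nhds 0) (nhds s₀) := by
          have : Continuous (fun t : ℂ => s₀ + t • c) :=
            continuous_const.add (continuous_id.smul continuous_const)
          have h0 : s₀ + (0 : ℂ) • c = s₀ := by simp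
          simpa [h0] using this.tendsto (0 : ℂ)
        filter_upwards [htend.eventually (hs₀S : f =ᶠ[nhds s₀] 0)] with t ht
        exact ht
      have hEq := (hdiffh.analyticOnNhd
        Metric.isOpen_ball).eqOn_zero_of_preconnected_of_eventuallyEq_zero
        (convex_ball (0 : ℂ) 2).isPreconnected (Metric.mem_ball_self two_pos) hev0
      have h1 : (1 : ℂ) ∈ Metric.ball (0 : ℂ) 2 := by
        rw [mem_ball_zero_iff]
        norm_num
      have := hEq h1
      simpa [hc] using this
    apply Filter.eventuallyEq_iff_exists_mem.2
    exact ⟨Metric.ball z (r / 6), Metric.ball_mem_nhds z (by positivity), hkey⟩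
  have hsub : U ⊆ S := hUconn.subset_of_closure_inter_subset hSopen ⟨x₀, hx₀, hev⟩ hclos
  intro x hx
  exact (hsub hx : f =ᶠ[nhds x] 0).eq_of_nhds

/-- The complexification of a formal multilinear series on `ℝⁿ` with values in `ℂⁿ`. -/
noncomputable def cseries (n : ℕ) (q : FormalMultilinearSeries ℝ (Fin n → ℝ) (Fin n → ℂ)) :
    FormalMultilinearSeries ℂ (Fin n → ℂ) (Fin n → ℂ) := fun k =>
  ∑ j : Fin k → Fin n,
    ((ContinuousMultilinearMap.mkPiAlgebra ℂ (Fin k) ℂ).compContinuousLinearMap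
      (fun i => ContinuousLinearMap.proj (j i))).smulRight (q k fun i => Pi.single (j i) 1)

lemma cseries_apply (n : ℕ) (q : FormalMultilinearSeries ℝ (Fin n → ℝ) (Fin n → ℂ)) (k : ℕ)
    (m : Fin k → (Fin n → ℂ)) :
    cseries n q k m
      = ∑ j : Fin k → Fin n, (∏ i, m i (j i)) • q k (fun i => Pi.single (j i) 1) := by
  simp [cseries, ContinuousMultilinearMap.sum_apply,
    ContinuousMultilinearMap.smulRight_apply,
    ContinuousMultilinearMap.compContinuousLinearMap_apply,
    ContinuousMultilinearMap.mkPiAlgebra_apply]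

lemma cseries_real (n : ℕ) (q : FormalMultilinearSeries ℝ (Fin n → ℝ) (Fin n → ℂ)) (k : ℕ)
    (v : Fin k → (Fin n → ℝ)) :
    cseries n q k (fun i => incl n (v i)) = q k v := by
  classical
  set ιL : (Fin n → ℝ) →ₗ[ℝ] (Fin n → ℂ) :=
    LinearMap.pi (fun i => Complex.ofRealAm.toLinearMap.comp (LinearMap.proj i)) with hιL
  have hιL_apply : ∀ y : Fin n → ℝ, ιL y = incl n y := by
    intro y
    funext i
    simp [hιL, incl, LinearMap.pi_apply, Complex.ofRealAm_coe]
  set F : MultilinearMap ℝ (fun _ : Fin k => (Fin n → ℝ)) (Fin n → ℂ) :=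
    ((cseries n q k).toMultilinearMap.restrictScalars ℝ).compLinearMap (fun _ => ιL) with hF
  set G : MultilinearMap ℝ (fun _ : Fin k => (Fin n → ℝ)) (Fin n → ℂ) :=
    (q k).toMultilinearMap with hG
  have hFG : F = G := by
    apply Module.Basis.ext_multilinear (fun _ => Pi.basisFun ℝ (Fin n))
    intro jv
    have hbasis : ∀ a : Fin n, (Pi.basisFun ℝ (Fin n)) a = Pi.single a 1 := fun a =>
      Pi.basisFun_apply ℝ (Fin n) a
    have hFval : F (fun i => (Pi.basisFun ℝ (Fin n)) (jv i))
        = cseries n q k (fun i => Pi.single (jv i) 1) := by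
      simp only [hF, MultilinearMap.compLinearMap_apply, MultilinearMap.coe_restrictScalars,
        ContinuousMultilinearMap.coe_coe, hbasis]
      congr 1
      funext i
      rw [hιL_apply, incl_single]
    rw [hFval, cseries_apply]
    have hterm : ∀ j : Fin k → Fin n,
        (∏ i, (Pi.single (jv i) (1 : ℂ) : Fin n → ℂ) (j i)) = if j = jv then 1 else 0 := by
      intro j
      by_cases hj : j = jv
      · subst hj
        simp [Pi.single_apply]
      · rw [if_neg hj]
        obtain ⟨i, hi⟩ := Function.ne_iff.1 hj
        apply Finset.prod_eq_zero (Finset.mem_univ i)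
        simp [Pi.single_apply, hi]
    rw [Finset.sum_congr rfl (fun j _ => by rw [hterm j])]
    simp only [ite_smul, one_smul, zero_smul]
    rw [Finset.sum_ite_eq' Finset.univ jv]
    simp [hG, hbasis]
  have := congrFun (congrArg (fun (M : MultilinearMap ℝ (fun _ : Fin k => (Fin n → ℝ))
    (Fin n → ℂ)) => M.toFun) hFG) v
  simpa [hF, hG, hιL_apply] using this

lemma cseries_norm (n : ℕ) (q : FormalMultilinearSeries ℝ (Fin n → ℝ) (Fin n → ℂ)) (k : ℕ) :
    ‖cseries n q k‖ ≤ (n : ℝ) ^ k * ‖q k‖ := by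
  refine ContinuousMultilinearMap.opNorm_le_bound (by positivity) fun m => ?_
  rw [cseries_apply]
  have hterm : ∀ j : Fin k → Fin n,
      ‖(∏ i, m i (j i)) • q k (fun i => Pi.single (j i) 1)‖ ≤ ‖q k‖ * ∏ i, ‖m i‖ := by
    intro j
    rw [norm_smul]
    have h1 : ‖∏ i, m i (j i)‖ ≤ ∏ i, ‖m i‖ := by
      rw [norm_prod]
      apply Finset.prod_le_prod (fun i _ => norm_nonneg _)
      intro i _
      exact norm_le_pi_norm (m i) (j i)
    have h2 : ‖q k (fun i => Pi.single (j i) 1)‖ ≤ ‖q k‖ := by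
      have := (q k).le_opNorm (fun i => Pi.single (j i) 1)
      have hprod : (∏ i : Fin k, ‖(Pi.single (j i) 1 : Fin n → ℝ)‖) = 1 := by
        apply Finset.prod_eq_one
        intro i _
        rw [Pi.norm_single]
        norm_num
      rw [hprod, mul_one] at this
      exact this
    calc ‖∏ i, m i (j i)‖ * ‖q k (fun i => Pi.single (j i) 1)‖
        ≤ (∏ i, ‖m i‖) * ‖q k‖ := by
          apply mul_le_mul h1 h2 (norm_nonneg _) (Finset.prod_nonneg fun i _ => norm_nonneg _)
      _ = ‖q k‖ * ∏ i, ‖m i‖ := mul_comm _ _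
  calc ‖∑ j : Fin k → Fin n, (∏ i, m i (j i)) • q k (fun i => Pi.single (j i) 1)‖
      ≤ ∑ j : Fin k → Fin n, ‖(∏ i, m i (j i)) • q k (fun i => Pi.single (j i) 1)‖ :=
        norm_sum_le _ _
    _ ≤ ∑ _j : Fin k → Fin n, ‖q k‖ * ∏ i, ‖m i‖ := Finset.sum_le_sum fun j _ => hterm j
    _ = (Fintype.card (Fin k → Fin n) : ℝ) * (‖q k‖ * ∏ i, ‖m i‖) := by
        rw [Finset.sum_const, nsmul_eq_mul, Finset.card_univ]
    _ = (n : ℝ) ^ k * ‖q k‖ * ∏ i, ‖m i‖ := by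
        rw [Fintype.card_fun, Fintype.card_fin, Fintype.card_fin]
        push_cast
        ring

lemma cseries_radius_pos {n : ℕ} (hn : 0 < n)
    (q : FormalMultilinearSeries ℝ (Fin n → ℝ) (Fin n → ℂ)) (hq : 0 < q.radius) :
    0 < (cseries n q).radius := by
  obtain ⟨r, hr0, hrlt⟩ := ENNReal.lt_iff_exists_nnreal_btwn.1 hq
  have hr0' : 0 < r := by exact_mod_cast hr0
  obtain ⟨C, hC0, hbound⟩ := q.norm_mul_pow_le_of_lt_radius hrlt
  have hnn : (0 : ℝ≥0) < (n : ℝ≥0) := by exact_mod_cast hn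
  have hkey : ∀ k, ‖cseries n q k‖ * ((r / (n : ℝ≥0) : ℝ≥0) : ℝ) ^ k ≤ C := by
    intro k
    have hcoe : ((r / (n : ℝ≥0) : ℝ≥0) : ℝ) = (r : ℝ) / (n : ℝ) := by
      push_cast
      rfl
    have hnpos : (0 : ℝ) < (n : ℝ) := by exact_mod_cast hn
    calc ‖cseries n q k‖ * ((r / (n : ℝ≥0) : ℝ≥0) : ℝ) ^ k
        ≤ ((n : ℝ) ^ k * ‖q k‖) * ((r : ℝ) / (n : ℝ)) ^ k := by
          rw [hcoe]
          apply mul_le_mul_of_nonneg_right (cseries_norm n q k) (by positivity)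
      _ = ‖q k‖ * (r : ℝ) ^ k := by
          rw [div_pow]
          field_simp
      _ ≤ C := hbound k
  have hle := (cseries n q).le_radius_of_bound C (r := r / (n : ℝ≥0)) hkey
  apply lt_of_lt_of_le _ hle
  have : (0 : ℝ≥0) < r / (n : ℝ≥0) := by positivity
  exact_mod_cast this

end IdentityTotallyRealAux

open IdentityTotallyRealAux in
/-- Identity theorem: a holomorphic function on a connected open set `U ⊆ ℂⁿ`
which vanishes on a connected real-analytic totally real submanifold `M ⊆ U` of
real dimension `n` vanishes identically on `U`.

The submanifold structure is encoded by local real-analytic parametrizations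
`φ : ℝⁿ → ℂⁿ`; total reality of maximal dimension is encoded by the requirement
that the images of the standard basis vectors under the differential of `φ` are
`ℂ`-linearly independent (equivalently, `T_xM ∩ J(T_xM) = 0` with `dim_ℝ M = n`). -/
theorem identity_theorem_totally_real (n : ℕ) (U : Set (Fin n → ℂ))
    (hUopen : IsOpen U) (hUconn : IsConnected U)
    (f : (Fin n → ℂ) → ℂ) (hf : DifferentiableOn ℂ f U)
    (M : Set (Fin n → ℂ)) (hMU : M ⊆ U) (hMconn : IsConnected M)
    (hchart : ∀ x ∈ M, ∃ (φ : (Fin n → ℝ) → (Fin n → ℂ)) (s : Set (Fin n → ℝ)),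
      IsOpen s ∧ (0 : Fin n → ℝ) ∈ s ∧ AnalyticOn ℝ φ s ∧ φ 0 = x ∧
      (∃ V : Set (Fin n → ℂ), IsOpen V ∧ x ∈ V ∧ M ∩ V = φ '' s) ∧
      LinearIndependent ℂ (fun i : Fin n => fderiv ℝ φ 0 (Pi.single i 1)))
    (hvanish : ∀ x ∈ M, f x = 0) :
    ∀ x ∈ U, f x = 0 := by
  classical
  obtain ⟨x₀, hx₀⟩ := hMconn.nonempty
  have hx₀U : x₀ ∈ U := hMU hx₀
  rcases Nat.eq_zero_or_pos n with hn | hn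
  · subst hn
    intro x hx
    have : x = x₀ := Subsingleton.elim x x₀
    rw [this]
    exact hvanish _ hx₀
  haveI : Nonempty (Fin n) := ⟨⟨0, hn⟩⟩
  obtain ⟨φ, s, hs_open, hs0, hφ, hφ0, ⟨V, hVopen, hxV, hMV⟩, hindep⟩ := hchart x₀ hx₀
  have hφn : AnalyticOnNhd ℝ φ s := (hs_open.analyticOn_iff_analyticOnNhd).1 hφ
  have himg : ∀ y ∈ s, φ y ∈ M := by
    intro y hy
    have : φ y ∈ M ∩ V := hMV ▸ Set.mem_image_of_mem φ hy
    exact this.1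
  -- power series of the chart at the origin
  obtain ⟨q, hqat⟩ := hφn 0 hs0
  obtain ⟨rq, hq⟩ := hqat
  -- complexified power series and holomorphic extension Φ
  set Q := cseries n q with hQ
  have hQrad : 0 < Q.radius := cseries_radius_pos hn q (lt_of_lt_of_le hq.r_pos hq.r_le)
  set Φ := Q.sum with hΦdef
  have hΦ : HasFPowerSeriesOnBall Φ Q 0 Q.radius := Q.hasFPowerSeriesOnBall hQrad
  -- agreement of Φ with φ on small real points
  have hagree : ∀ y : Fin n → ℝ, (‖y‖₊ : ENNReal) < min rq Q.radius → Φ (incl n y) = φ y := by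
    intro y hy
    have hy1 : y ∈ Metric.eball (0 : Fin n → ℝ) rq := by
      rw [EMetric.mem_ball, edist_zero_right]
      exact lt_of_lt_of_le hy (min_le_left _ _)
    have hy2 : incl n y ∈ Metric.eball (0 : Fin n → ℂ) Q.radius := by
      rw [EMetric.mem_ball, edist_zero_right]
      rw [enorm_eq_nnnorm, show ‖incl n y‖₊ = ‖y‖₊ from nnnorm_incl y]
      exact lt_of_lt_of_le hy (min_le_right _ _)
    have h1 : HasSum (fun k => q k (fun _ => y)) (φ (0 + y)) := hq.hasSum hy1
    have h2 : HasSum (fun k => Q k (fun _ => incl n y)) (Φ (0 + incl n y)) := hΦ.hasSum hy2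
    have h3 : (fun k => Q k (fun _ => incl n y)) = fun k => q k (fun _ => y) := by
      funext k
      exact cseries_real n q k (fun _ => y)
    rw [h3] at h2
    have := h2.unique h1
    simpa using this
  have hmin_pos : (0 : ENNReal) < min rq Q.radius := lt_min hq.r_pos hQrad
  have hΦ0 : Φ 0 = x₀ := by
    have h0 : incl n (0 : Fin n → ℝ) = 0 := by
      funext i; simp [incl]
    have := hagree 0 (by simpa using hmin_pos)
    rw [h0] at this
    rw [this, hφ0]
  -- identification of the real differential of φ with the degree-one coefficient
  have hφder : ∀ i : Fin n, fderiv ℝ φ 0 (Pi.single i 1) = q 1 (fun _ => Pi.single i 1) := by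
    intro i
    rw [hq.hasFPowerSeriesAt.hasFDerivAt.fderiv, continuousMultilinearCurryFin1_apply,
      snoc_const]
  set c : Fin n → (Fin n → ℂ) := fun i => q 1 (fun _ => Pi.single i 1) with hc
  have hcindep : LinearIndependent ℂ c := by
    have : (fun i : Fin n => fderiv ℝ φ 0 (Pi.single i 1)) = c := by
      funext i; rw [hφder i]
    rwa [this] at hindep
  -- the derivative of Φ at 0 is an invertible complex-linear map
  set T := continuousMultilinearCurryFin1 ℂ (Fin n → ℂ) (Fin n → ℂ) (Q 1) with hT
  have hstrict : HasStrictFDerivAt Φ T 0 := hΦ.hasFPowerSeriesAt.hasStrictFDerivAt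
  have hTi : ∀ i : Fin n, T (Pi.single i 1) = c i := by
    intro i
    rw [hT, continuousMultilinearCurryFin1_apply, snoc_const]
    have := cseries_real n q 1 (fun _ => Pi.single i 1)
    rw [show (fun _ : Fin 1 => incl n (Pi.single i 1)) = fun _ : Fin 1 => Pi.single i (1 : ℂ)
      from funext fun _ => incl_single i] at this
    exact this
  have hcard : Fintype.card (Fin n) = Module.finrank ℂ (Fin n → ℂ) := by
    simp [Module.finrank_fin_fun]
  set b := basisOfLinearIndependentOfCardEqFinrank hcindep hcard with hb
  set L0 : (Fin n → ℂ) ≃ₗ[ℂ] (Fin n → ℂ) := (Pi.basisFun ℂ (Fin n)).equiv b (Equiv.refl _)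
    with hL0
  set L : (Fin n → ℂ) ≃L[ℂ] (Fin n → ℂ) := L0.toContinuousLinearEquiv with hL
  have hTL : T = (L : (Fin n → ℂ) →L[ℂ] (Fin n → ℂ)) := by
    apply ContinuousLinearMap.coe_injective
    apply Module.Basis.ext (Pi.basisFun ℂ (Fin n))
    intro i
    rw [Pi.basisFun_apply]
    have hrhs : ((L : (Fin n → ℂ) →L[ℂ] (Fin n → ℂ)) : (Fin n → ℂ) →ₗ[ℂ] (Fin n → ℂ))
        (Pi.single i 1) = c i := by
      have h1 : ((L : (Fin n → ℂ) →L[ℂ] (Fin n → ℂ)) : (Fin n → ℂ) →ₗ[ℂ] (Fin n → ℂ))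
          (Pi.single i 1) = L0 (Pi.single i 1) := rfl
      rw [h1]
      have h2 : L0 ((Pi.basisFun ℂ (Fin n)) i) = b (Equiv.refl _ i) :=
        (Pi.basisFun ℂ (Fin n)).equiv_apply i b (Equiv.refl _)
      rw [Pi.basisFun_apply] at h2
      rw [h2]
      simp [hb, coe_basisOfLinearIndependentOfCardEqFinrank]
    rw [hrhs]
    exact hTi i
  have hmap : Filter.map Φ (nhds 0) = nhds x₀ := by
    have hstrict' : HasStrictFDerivAt Φ (L : (Fin n → ℂ) →L[ℂ] (Fin n → ℂ)) 0 := by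
      rwa [hTL] at hstrict
    have := hstrict'.map_nhds_eq_of_equiv
    rwa [hΦ0] at this
  -- choose a polydisc where everything holds
  have hΦan : AnalyticAt ℂ Φ 0 := hΦ.analyticAt
  have hΦev : ∀ᶠ w in nhds (0 : Fin n → ℂ), AnalyticAt ℂ Φ w := hΦan.eventually_analyticAt
  have hΦU : ∀ᶠ w in nhds (0 : Fin n → ℂ), Φ w ∈ U := by
    have : Filter.Tendsto Φ (nhds 0) (nhds x₀) := by
      rw [← hmap]; exact le_rfl
    exact this.eventually (hUopen.eventually_mem (hΦ0 ▸ hx₀U))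
  obtain ⟨ε₁, hε₁pos, hε₁⟩ := Metric.eventually_nhds_iff_ball.1 (hΦev.and hΦU)
  obtain ⟨ε₂, hε₂pos, hε₂ball⟩ := Metric.isOpen_iff.1 hs_open 0 hs0
  obtain ⟨r', hr'0, hr'lt⟩ := ENNReal.lt_iff_exists_nnreal_btwn.1 hmin_pos
  have hr'0' : (0 : ℝ) < (r' : ℝ) := by exact_mod_cast hr'0
  set ρ := min ε₁ (min ε₂ (r' : ℝ)) with hρdef
  have hρpos : 0 < ρ := lt_min hε₁pos (lt_min hε₂pos hr'0')
  -- f ∘ Φ vanishes on the polydisc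
  have hg : DifferentiableOn ℂ (f ∘ Φ) (Metric.ball 0 ρ) := by
    intro w hw
    have hw1 : w ∈ Metric.ball (0 : Fin n → ℂ) ε₁ :=
      Metric.ball_subset_ball (min_le_left _ _) hw
    obtain ⟨hwan, hwU⟩ := hε₁ w hw1
    have hfd : DifferentiableAt ℂ f (Φ w) := hf.differentiableAt (hUopen.mem_nhds hwU)
    exact (hfd.comp w hwan.differentiableAt).differentiableWithinAt
  have hreal : ∀ y : Fin n → ℝ, ‖y‖ < ρ → (f ∘ Φ) (incl n y) = 0 := by
    intro y hy
    have hys : y ∈ s := by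
      apply hε₂ball
      rw [Metric.mem_ball, dist_zero_right]
      exact lt_of_lt_of_le hy (le_trans (min_le_right _ _) (min_le_left _ _))
    have hyr : (‖y‖₊ : ENNReal) < min rq Q.radius := by
      apply lt_trans _ hr'lt
      rw [ENNReal.coe_lt_coe]
      have : ‖y‖ < (r' : ℝ) := lt_of_lt_of_le hy (le_trans (min_le_right _ _) (min_le_right _ _))
      exact_mod_cast this
    have : Φ (incl n y) = φ y := hagree y hyr
    simp only [Function.comp_apply, this]
    exact hvanish _ (himg y hys)
  have hgzero : ∀ z ∈ Metric.ball (0 : Fin n → ℂ) ρ, (f ∘ Φ) z = 0 :=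
    polydisc_zero hρpos hg hreal
  -- transfer the vanishing through the local biholomorphism
  have hfev : f =ᶠ[nhds x₀] 0 := by
    rw [← hmap]
    have hev : ∀ᶠ w in nhds (0 : Fin n → ℂ), f (Φ w) = 0 := by
      filter_upwards [Metric.ball_mem_nhds 0 hρpos] with w hw
      exact hgzero w hw
    exact Filter.eventually_map.2 hev
  exact global_zero hUopen hUconn.isPreconnected hf hx₀U hfev
end
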